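/- arXiv:1612.08731 — 3 statements merged into one kernel-verified Lean document; each statement's English description precedes it below -/
import Mathlib

section
/- Gradient of the negative quantum entropy: on the open set of positive definite symmetric d×d matrices, the map P ↦ tr(P log P − P) is differentiable, and its derivative at P in any symmetric direction V equals tr( log(P) · V ). -/
open Matrix

/-- Matrix exponential of a real matrix. -/
noncomputable def mexp {d : ℕ} (A : Matrix (Fin d) (Fin d) ℝ) : Matrix (Fin d) (Fin d) ℝ :=
  NormedSpace.exp A

/-- Matrix logarithm of a symmetric (hermitian) real matrix, defined through the
eigendecomposition `P = U diag(σ) Uᵀ` as `log P = U diag(log σ) Uᵀ` (junk value `0`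
on non-symmetric matrices). -/
noncomputable def mlog {d : ℕ} (A : Matrix (Fin d) (Fin d) ℝ) : Matrix (Fin d) (Fin d) ℝ :=
  if h : A.IsHermitian then
    (h.eigenvectorUnitary : Matrix (Fin d) (Fin d) ℝ)
      * diagonal (fun i => Real.log (h.eigenvalues i))
      * star (h.eigenvectorUnitary : Matrix (Fin d) (Fin d) ℝ)
  else 0

/-- Quantum (von Neumann) entropy `H(P) = -tr(P log P - P)`. -/
noncomputable def qH {d : ℕ} (P : Matrix (Fin d) (Fin d) ℝ) : ℝ :=
  -(P * mlog P - P).trace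

/-- Quantum Kullback-Leibler divergence `KL(P|Q) = tr(P log P - P log Q - P + Q)`. -/
noncomputable def qKL {d : ℕ} (P Q : Matrix (Fin d) (Fin d) ℝ) : ℝ :=
  (P * mlog P - P * mlog Q - P + Q).trace

attribute [local instance] Matrix.frobeniusNormedAddCommGroup Matrix.frobeniusNormedSpace

/-!
Klein's inequality with a quadratic remainder. Write `A = ∑ aᵢ uᵢ uᵢᵀ`, `B = ∑ bⱼ vⱼ vⱼᵀ` and
`cᵢⱼ = ⟨uᵢ, vⱼ⟩²`. For any functions `h, h'`, the remainder
`tr h(B) - tr h(A) - tr (h'(A) (B - A))` equals `∑ cᵢⱼ (h bⱼ - h aᵢ - h' aᵢ (bⱼ - aᵢ))`.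
For `h x = x log x - x`, `h' = log` each scalar term lies between `0` and `(bⱼ - aᵢ)² / aᵢ`, and
`∑ cᵢⱼ (bⱼ - aᵢ)² = tr ((B - A)²) = ‖B - A‖²`. So the remainder of the linearisation of
`Q ↦ tr (Q log Q - Q)` at `P` is at most `(∑ 1 / pᵢ) ‖Q - P‖²`.
-/

namespace Real

lemma mul_log_bregman_nonneg {x y : ℝ} (hx : 0 < x) (hy : 0 < y) :
    0 ≤ y * log y - y - (x * log x - x) - log x * (y - x) := by
  have h := log_le_sub_one_of_pos (div_pos hx hy)
  rw [log_div hx.ne' hy.ne'] at h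
  have h' := mul_le_mul_of_nonneg_left h hy.le
  rw [mul_sub_one, mul_div_cancel₀ _ hy.ne'] at h'
  linarith

lemma mul_log_bregman_le {x y : ℝ} (hx : 0 < x) (hy : 0 < y) :
    y * log y - y - (x * log x - x) - log x * (y - x) ≤ (y - x) ^ 2 / x := by
  have h := log_le_sub_one_of_pos (div_pos hy hx)
  rw [log_div hy.ne' hx.ne'] at h
  calc y * log y - y - (x * log x - x) - log x * (y - x)
      = y * (log y - log x) - y + x := by ring
    _ ≤ y * (y / x - 1) - y + x := by gcongr
    _ = (y - x) ^ 2 / x := by field_simp; ring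

end Real

namespace Matrix

lemma IsHermitian.trace_mul_self_eq_norm_sq {n : Type*} [Fintype n] {M : Matrix n n ℝ}
    (hM : M.IsHermitian) : (M * M).trace = ‖M‖ ^ 2 := by
  have hnorm : ‖M‖ ^ 2 = ∑ i, ∑ j, M i j ^ 2 := by
    change ‖WithLp.toLp 2 fun i => WithLp.toLp 2 fun j => M i j‖ ^ 2 = _
    simp [PiLp.norm_sq_eq_of_L2]
  rw [hnorm]
  simp only [trace, diag, mul_apply, sq]
  refine Finset.sum_congr rfl fun i _ => Finset.sum_congr rfl fun j _ => ?_
  rw [← hM.apply j i, star_trivial]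

variable {n : Type*} [Fintype n] [DecidableEq n] {A B : Matrix n n ℝ}

lemma trace_conj_diagonal_mul_conj_diagonal (U V : Matrix n n ℝ) (a b : n → ℝ) :
    (U * diagonal a * star U * (V * diagonal b * star V)).trace
      = ∑ i, ∑ j, (star U * V) i j ^ 2 * a i * b j := by
  have hcycle : (U * diagonal a * star U * (V * diagonal b * star V)).trace
      = (diagonal a * (star U * V) * diagonal b * star (star U * V)).trace := by
    simp only [star_mul, star_star, Matrix.mul_assoc]
    rw [trace_mul_comm]
    simp only [Matrix.mul_assoc]
  rw [hcycle]
  simp only [trace, diag, mul_apply, diagonal_apply, star_apply, star_trivial, ite_mul, zero_mul,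
    mul_ite, mul_zero, Finset.sum_ite_eq, Finset.sum_ite_eq', Finset.mem_univ, if_true]
  exact Finset.sum_congr rfl fun i _ => Finset.sum_congr rfl fun j _ => by ring

namespace IsHermitian

noncomputable def overlap (hA : A.IsHermitian) (hB : B.IsHermitian) : Matrix n n ℝ :=
  (star (hA.eigenvectorUnitary : Matrix n n ℝ) * hB.eigenvectorUnitary).map (· ^ 2)

lemma cfc_eq_mul_diagonal_mul_star (hA : A.IsHermitian) (f : ℝ → ℝ) :
    hA.cfc f = (hA.eigenvectorUnitary : Matrix n n ℝ) * diagonal (f ∘ hA.eigenvalues)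
      * star (hA.eigenvectorUnitary : Matrix n n ℝ) := by
  simp [IsHermitian.cfc]

lemma cfc_const_one (hA : A.IsHermitian) : hA.cfc (fun _ => 1) = 1 := by
  rw [← cfc_eq, _root_.cfc_const_one ℝ A]

lemma cfc_id (hA : A.IsHermitian) : hA.cfc (fun x => x) = A := by
  rw [← cfc_eq, _root_.cfc_id' ℝ A]

lemma cfc_mul (hA : A.IsHermitian) (f g : ℝ → ℝ) :
    hA.cfc f * hA.cfc g = hA.cfc (fun x => f x * g x) := by
  simp only [IsHermitian.cfc, ← map_mul, diagonal_mul_diagonal]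
  rfl

lemma cfc_sub (hA : A.IsHermitian) (f g : ℝ → ℝ) :
    hA.cfc (fun x => f x - g x) = hA.cfc f - hA.cfc g := by
  simp only [IsHermitian.cfc, ← map_sub, diagonal_sub]
  rfl

lemma trace_cfc_mul_cfc (hA : A.IsHermitian) (hB : B.IsHermitian) (f g : ℝ → ℝ) :
    (hA.cfc f * hB.cfc g).trace
      = ∑ i, ∑ j, hA.overlap hB i j * f (hA.eigenvalues i) * g (hB.eigenvalues j) := by
  rw [cfc_eq_mul_diagonal_mul_star, cfc_eq_mul_diagonal_mul_star,
    trace_conj_diagonal_mul_conj_diagonal]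
  rfl

lemma trace_cfc_sub_sub_eq_sum_overlap (hA : A.IsHermitian) (hB : B.IsHermitian)
    (h h' : ℝ → ℝ) :
    (hB.cfc h).trace - (hA.cfc h).trace - (hA.cfc h' * (B - A)).trace
      = ∑ i, ∑ j, hA.overlap hB i j * (h (hB.eigenvalues j) - h (hA.eigenvalues i)
          - h' (hA.eigenvalues i) * (hB.eigenvalues j - hA.eigenvalues i)) := by
  -- Padding with `hA.cfc 1` or `hB.cfc 1` turns every trace into one of the form
  -- `tr (f(A) g(B))`, so that all four expand over the same overlap matrix.
  have hBh : hB.cfc h = hA.cfc (fun _ => 1) * hB.cfc h := by rw [cfc_const_one, one_mul]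
  have hAh : hA.cfc h = hA.cfc h * hB.cfc (fun _ => 1) := by rw [cfc_const_one, mul_one]
  have hA'B : hA.cfc h' * B = hA.cfc h' * hB.cfc (fun x => x) := by rw [cfc_id]
  have hA'A : hA.cfc h' * A = hA.cfc (fun x => h' x * x) * hB.cfc (fun _ => 1) := by
    rw [cfc_const_one, mul_one, ← cfc_mul, cfc_id]
  rw [Matrix.mul_sub, trace_sub, hBh, hAh, hA'B, hA'A]
  simp only [trace_cfc_mul_cfc, ← Finset.sum_sub_distrib]
  exact Finset.sum_congr rfl fun i _ => Finset.sum_congr rfl fun j _ => by ring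

lemma trace_sub_mul_sub_eq_sum_overlap (hA : A.IsHermitian) (hB : B.IsHermitian) :
    ((B - A) * (B - A)).trace
      = ∑ i, ∑ j, hA.overlap hB i j * (hB.eigenvalues j - hA.eigenvalues i) ^ 2 := by
  have hsq : ∀ {C : Matrix n n ℝ} (hC : C.IsHermitian), hC.cfc (fun x => x * x) = C * C :=
    fun hC => by rw [← hC.cfc_mul, hC.cfc_id]
  have hBB := trace_cfc_mul_cfc hA hB (fun _ => 1) (fun x => x * x)
  have hAB := trace_cfc_mul_cfc hA hB (fun x => x) (fun x => x)
  have hAA := trace_cfc_mul_cfc hA hB (fun x => x * x) (fun _ => 1)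
  rw [cfc_const_one, one_mul, hsq] at hBB
  rw [cfc_id, cfc_id] at hAB
  rw [cfc_const_one, mul_one, hsq] at hAA
  have expand :
      ((B - A) * (B - A)).trace = (B * B).trace - 2 * (A * B).trace + (A * A).trace := by
    simp only [Matrix.sub_mul, Matrix.mul_sub, trace_sub, trace_mul_comm B A]
    ring
  rw [expand, hBB, hAB, hAA]
  simp only [Finset.mul_sum, ← Finset.sum_sub_distrib, ← Finset.sum_add_distrib]
  exact Finset.sum_congr rfl fun i _ => Finset.sum_congr rfl fun j _ => by ring

lemma trace_mul_log_sub_eq_sum_overlap (hA : A.IsHermitian) (hB : B.IsHermitian) :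
    (B * hB.cfc Real.log - B).trace - (A * hA.cfc Real.log - A).trace
        - (hA.cfc Real.log * (B - A)).trace
      = ∑ i, ∑ j, hA.overlap hB i j
          * (hB.eigenvalues j * Real.log (hB.eigenvalues j) - hB.eigenvalues j
            - (hA.eigenvalues i * Real.log (hA.eigenvalues i) - hA.eigenvalues i)
            - Real.log (hA.eigenvalues i) * (hB.eigenvalues j - hA.eigenvalues i)) := by
  have hcfc : ∀ {C : Matrix n n ℝ} (hC : C.IsHermitian),
      C * hC.cfc Real.log - C = hC.cfc (fun x => x * Real.log x - x) :=
    fun hC => by rw [hC.cfc_sub, ← hC.cfc_mul, hC.cfc_id]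
  rw [hcfc hA, hcfc hB]
  exact hA.trace_cfc_sub_sub_eq_sum_overlap hB _ _

end IsHermitian

lemma PosDef.abs_trace_mul_log_sub_le (hA : A.PosDef) (hB : B.PosDef) :
    |(B * hB.1.cfc Real.log - B).trace - (A * hA.1.cfc Real.log - A).trace
        - (hA.1.cfc Real.log * (B - A)).trace|
      ≤ (∑ k, (hA.1.eigenvalues k)⁻¹) * ((B - A) * (B - A)).trace := by
  set a := hA.1.eigenvalues
  set b := hB.1.eigenvalues
  have hc : ∀ i j, 0 ≤ hA.1.overlap hB.1 i j := fun i j => sq_nonneg _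
  have ha_inv : ∀ i, (a i)⁻¹ ≤ ∑ k, (a k)⁻¹ := fun i =>
    Finset.single_le_sum (fun k _ => inv_nonneg.2 (hA.eigenvalues_pos k).le) (Finset.mem_univ i)
  rw [hA.1.trace_mul_log_sub_eq_sum_overlap hB.1, hA.1.trace_sub_mul_sub_eq_sum_overlap hB.1,
    abs_of_nonneg (Finset.sum_nonneg fun i _ => Finset.sum_nonneg fun j _ =>
      mul_nonneg (hc i j) (Real.mul_log_bregman_nonneg (hA.eigenvalues_pos i)
        (hB.eigenvalues_pos j))), Finset.mul_sum]
  refine Finset.sum_le_sum fun i _ => ?_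
  rw [Finset.mul_sum]
  refine Finset.sum_le_sum fun j _ => ?_
  calc hA.1.overlap hB.1 i j * (b j * Real.log (b j) - b j - (a i * Real.log (a i) - a i)
          - Real.log (a i) * (b j - a i))
      ≤ hA.1.overlap hB.1 i j * ((b j - a i) ^ 2 * (a i)⁻¹) := by
        rw [← div_eq_mul_inv]
        exact mul_le_mul_of_nonneg_left
          (Real.mul_log_bregman_le (hA.eigenvalues_pos i) (hB.eigenvalues_pos j)) (hc i j)
    _ ≤ hA.1.overlap hB.1 i j * ((b j - a i) ^ 2 * ∑ k, (a k)⁻¹) :=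
        mul_le_mul_of_nonneg_left (mul_le_mul_of_nonneg_left (ha_inv i) (sq_nonneg _)) (hc i j)
    _ = (∑ k, (a k)⁻¹) * (hA.1.overlap hB.1 i j * (b j - a i) ^ 2) := by ring

end Matrix

lemma mlog_eq_cfc {d : ℕ} {A : Matrix (Fin d) (Fin d) ℝ} (hA : A.IsHermitian) :
    mlog A = hA.cfc Real.log := by
  rw [mlog, dif_pos hA, hA.cfc_eq_mul_diagonal_mul_star]
  rfl

lemma hasFDerivWithinAt_of_norm_sub_le_sq {𝕜 E F : Type*} [NontriviallyNormedField 𝕜]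
    [NormedAddCommGroup E] [NormedSpace 𝕜 E] [NormedAddCommGroup F] [NormedSpace 𝕜 F]
    {f : E → F} {f' : E →L[𝕜] F} {s : Set E} {x : E} {C : ℝ}
    (h : ∀ᶠ y in nhdsWithin x s, ‖f y - f x - f' (y - x)‖ ≤ C * ‖y - x‖ ^ 2) :
    HasFDerivWithinAt f f' s x := by
  refine hasFDerivWithinAt_iff_isLittleO.2 ((Asymptotics.IsBigO.of_bound C ?_).trans_isLittleO
    ((Asymptotics.isLittleO_pow_sub_sub x one_lt_two).mono nhdsWithin_le_nhds))
  filter_upwards [h] with y hy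
  rwa [Real.norm_of_nonneg (by positivity)]

/-- **Gradient of the negative quantum entropy.** On the open set of positive definite
symmetric matrices, the map `P ↦ tr(P log P - P)` is differentiable, and its derivative
at `P` in any symmetric direction `V` equals `tr(log(P)·V)`. -/
theorem negEntropy_hasFDeriv {d : ℕ} (P : Matrix (Fin d) (Fin d) ℝ) (hP : P.PosDef) :
    ∃ f' : Matrix (Fin d) (Fin d) ℝ →L[ℝ] ℝ,
      HasFDerivWithinAt (fun Q : Matrix (Fin d) (Fin d) ℝ => (Q * mlog Q - Q).trace) f'
        {Q : Matrix (Fin d) (Fin d) ℝ | Q.PosDef} P ∧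
      ∀ V : Matrix (Fin d) (Fin d) ℝ, V.IsHermitian → f' V = (mlog P * V).trace := by
  let L := traceLinearMap (Fin d) ℝ ℝ ∘ₗ LinearMap.mulLeft ℝ (mlog P)
  refine ⟨L.toContinuousLinearMap, ?_, fun V _ => rfl⟩
  refine hasFDerivWithinAt_of_norm_sub_le_sq (C := ∑ k, (hP.1.eigenvalues k)⁻¹) ?_
  filter_upwards [self_mem_nhdsWithin] with Q (hQ : Q.PosDef)
  change ‖_ - _ - (mlog P * (Q - P)).trace‖ ≤ _
  rw [← (hQ.1.sub hP.1).trace_mul_self_eq_norm_sq, mlog_eq_cfc hQ.1, mlog_eq_cfc hP.1,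
    Real.norm_eq_abs]
  exact hP.abs_trace_mul_log_sub_le hQ
end

section
/- Common eigenbasis reduction: suppose there is an orthogonal matrix U such that μ_i = U diag(a_i) Uᵀ and ν_j = U diag(b_j) Uᵀ for all i, j, where a_i, b_j ∈ ℝ^d have strictly positive entries, and c_{ij} = c̃_{ij}·Id with c̃_{ij} ∈ ℝ. Then W_ε(μ,ν) = Σ_{s=1}^d W̃_ε( (a_{i,s})_{i∈I}, (b_{j,s})_{j∈J} ): the quantum problem decomposes into d independent scalar entropic unbalanced optimal transport problems along each eigendirection, where W̃_ε(a,b) is the infimum over positive reals (g_{ij}) of Σ_{ij} g_{ij} c̃_{ij} + ρ1 Σ_i kl(Σ_j g_{ij} | a_i) + ρ2 Σ_j kl(Σ_i g_{ij} | b_j) + ε Σ_{ij} (g_{ij} log g_{ij} − g_{ij}), with kl(s|t) := s log(s/t) − s + t. -/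
open Matrix

/-- The kernel `K(u,v)_{ij} = -(c_{ij} + ρ1 u_i + ρ2 v_j)/ε`. -/
noncomputable def Kern {d : ℕ} {I J : Type*}
    (c : I → J → Matrix (Fin d) (Fin d) ℝ) (ρ1 ρ2 ε : ℝ)
    (u : I → Matrix (Fin d) (Fin d) ℝ) (v : J → Matrix (Fin d) (Fin d) ℝ)
    (i : I) (j : J) : Matrix (Fin d) (Fin d) ℝ :=
  (-ε⁻¹) • (c i j + ρ1 • u i + ρ2 • v j)

/-- Primal entropy-regularized quantum OT objective
`⟨γ,c⟩ + ρ1 KL(γ1_J|μ) + ρ2 KL(γᵀ1_I|ν) - ε H(γ)`. -/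
noncomputable def primal {d : ℕ} {I J : Type*} [Fintype I] [Fintype J]
    (c : I → J → Matrix (Fin d) (Fin d) ℝ)
    (μ : I → Matrix (Fin d) (Fin d) ℝ) (ν : J → Matrix (Fin d) (Fin d) ℝ)
    (ρ1 ρ2 ε : ℝ) (γ : I → J → Matrix (Fin d) (Fin d) ℝ) : ℝ :=
  (∑ i, ∑ j, ((γ i j) * (c i j)ᵀ).trace)
    + ρ1 * ∑ i, qKL (∑ j, γ i j) (μ i)
    + ρ2 * ∑ j, qKL (∑ i, γ i j) (ν j)
    - ε * ∑ i, ∑ j, qH (γ i j)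

/-- Dual entropy-regularized quantum OT objective. -/
noncomputable def dualF {d : ℕ} {I J : Type*} [Fintype I] [Fintype J]
    (c : I → J → Matrix (Fin d) (Fin d) ℝ)
    (μ : I → Matrix (Fin d) (Fin d) ℝ) (ν : J → Matrix (Fin d) (Fin d) ℝ)
    (ρ1 ρ2 ε : ℝ)
    (u : I → Matrix (Fin d) (Fin d) ℝ) (v : J → Matrix (Fin d) (Fin d) ℝ) : ℝ :=
  -(ρ1 * ∑ i, (mexp (u i + mlog (μ i)) - μ i).trace
    + ρ2 * ∑ j, (mexp (v j + mlog (ν j)) - ν j).trace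
    + ε * ∑ i, ∑ j, (mexp (Kern c ρ1 ρ2 ε u v i j)).trace)

/-- Scalar relative entropy `kl(s|t) = s log(s/t) - s + t`. -/
noncomputable def skl (s t : ℝ) : ℝ := s * Real.log (s / t) - s + t

/-- Scalar entropic unbalanced optimal transport objective. -/
noncomputable def sObj {I J : Type*} [Fintype I] [Fintype J]
    (ct : I → J → ℝ) (a : I → ℝ) (b : J → ℝ) (ρ1 ρ2 ε : ℝ) (g : I → J → ℝ) : ℝ :=
  (∑ i, ∑ j, g i j * ct i j)
    + ρ1 * ∑ i, skl (∑ j, g i j) (a i)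
    + ρ2 * ∑ j, skl (∑ i, g i j) (b j)
    + ε * ∑ i, ∑ j, (g i j * Real.log (g i j) - g i j)

/-!
In the common eigenbasis `U` all data are diagonal. For a matrix `P` let `p(P)` be the diagonal
of `Uᵀ * P * U`. For every collection `γ`, the quantum objective equals the sum over the
eigendirections `s` of the scalar objectives at `(p(γ i j) s)`, plus nonnegative multiples of the
divergences `KL(P | pinching U P)` of the `γ i j` and of their marginals from their pinchings
`U * diagonal p(P) * Uᵀ`. These divergences are nonnegative: writing `P = V diag(λ) Vᵀ`, the
vector `p(P)` is `λ` averaged by the doubly stochastic matrix `((Uᵀ V) s k ^ 2)`, and `x log x`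
is convex. They vanish when every `γ i j` is diagonal in `U`. So the infimum may be taken over
such `γ`, and the problem splits into `d` independent scalar problems.
-/

open Polynomial

lemma diag_conj_sum {n K : Type*} [Fintype n] [Fintype K] (U : Matrix n n ℝ)
    (γ : K → Matrix n n ℝ) (s : n) :
    (Uᵀ * (∑ k, γ k) * U).diag s = ∑ k, (Uᵀ * γ k * U).diag s := by
  rw [Matrix.mul_sum, Finset.sum_mul, diag_sum, Finset.sum_apply]

section OrthogonalConjugation

variable {n : Type*} [Fintype n] [DecidableEq n] {U : Matrix n n ℝ}

noncomputable def orthogonalConj (hU : Uᵀ * U = 1) : Matrix n n ℝ ≃⋆ₐ[ℝ] Matrix n n ℝ :=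
  Unitary.conjStarAlgAut ℝ _ ⟨U, mem_unitaryGroup_iff'.mpr <| by
    rwa [star_eq_conjTranspose, conjTranspose_eq_transpose_of_trivial]⟩

lemma orthogonalConj_apply (hU : Uᵀ * U = 1) (A : Matrix n n ℝ) :
    orthogonalConj hU A = U * A * Uᵀ := by
  simp [orthogonalConj, star_eq_conjTranspose, conjTranspose_eq_transpose_of_trivial]

lemma aeval_diagonal (σ : n → ℝ) (p : ℝ[X]) :
    aeval (diagonal σ) p = diagonal (fun s => p.eval (σ s)) := by
  rw [← diagonalAlgHom_apply (R := ℝ), aeval_algHom_apply, aeval_pi_apply]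
  rfl

lemma aeval_conj_diagonal (hU : Uᵀ * U = 1) (σ : n → ℝ) (p : ℝ[X]) :
    aeval (U * diagonal σ * Uᵀ) p = U * diagonal (fun s => p.eval (σ s)) * Uᵀ := by
  rw [← orthogonalConj_apply hU, ← orthogonalConj_apply hU, aeval_algHom_apply, aeval_diagonal]

lemma sum_conj_diagonal {K : Type*} [Fintype K] (x : K → n → ℝ) :
    ∑ k, U * diagonal (x k) * Uᵀ = U * diagonal (fun s => ∑ k, x k s) * Uᵀ := by
  rw [← Finset.sum_mul, ← Finset.mul_sum, ← Finset.sum_fn]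
  exact congrArg (U * · * Uᵀ) (map_sum (diagonalAddMonoidHom n ℝ) x _).symm

lemma diag_conj_conj_diagonal (hU : Uᵀ * U = 1) (x : n → ℝ) :
    (Uᵀ * (U * diagonal x * Uᵀ) * U).diag = x := by
  rw [show Uᵀ * (U * diagonal x * Uᵀ) * U = (Uᵀ * U) * diagonal x * (Uᵀ * U) by noncomm_ring,
    hU, Matrix.one_mul, Matrix.mul_one, diag_diagonal]

lemma trace_transpose_mul_mul_self (hU : Uᵀ * U = 1) (P : Matrix n n ℝ) :
    (Uᵀ * P * U).trace = P.trace := by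
  rw [trace_mul_cycle, mul_eq_one_comm.mp hU, one_mul]

lemma trace_conj_diagonal (hU : Uᵀ * U = 1) (x : n → ℝ) :
    (U * diagonal x * Uᵀ).trace = ∑ s, x s := by
  rw [trace_mul_cycle, hU, Matrix.one_mul, trace_diagonal]

lemma trace_mul_conj_diagonal (P : Matrix n n ℝ) (x : n → ℝ) :
    (P * (U * diagonal x * Uᵀ)).trace = ∑ s, (Uᵀ * P * U).diag s * x s := by
  rw [← Matrix.mul_assoc, trace_mul_comm, ← Matrix.mul_assoc, ← Matrix.mul_assoc]
  simp [Matrix.trace, Matrix.mul_apply, diagonal_apply]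

lemma trace_mul_transpose_smul_one (hU : Uᵀ * U = 1) (γ : Matrix n n ℝ) (c : ℝ) :
    (γ * (c • (1 : Matrix n n ℝ))ᵀ).trace = c * ∑ s, (Uᵀ * γ * U).diag s := by
  rw [transpose_smul, transpose_one, Matrix.mul_smul, Matrix.mul_one, trace_smul, smul_eq_mul,
    ← trace_transpose_mul_mul_self hU γ]
  rfl

lemma Matrix.PosDef.transpose_mul_mul_of_orthogonal {P : Matrix n n ℝ} (hP : P.PosDef)
    (hU : Uᵀ * U = 1) : (Uᵀ * P * U).PosDef := by
  have hinj : Function.Injective U.mulVec :=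
    Function.LeftInverse.injective (g := Uᵀ.mulVec) fun x => by rw [mulVec_mulVec, hU, one_mulVec]
  simpa [conjTranspose_eq_transpose_of_trivial] using hP.conjTranspose_mul_mul_same hinj

/-- The diagonal of `W * diagonal l * Wᵀ` is `l` averaged by the doubly stochastic matrix
`(W i k ^ 2)`, so Jensen's inequality applies row by row. -/
lemma ConvexOn.sum_diag_conj_diagonal_le {s : Set ℝ} {f : ℝ → ℝ} (hf : ConvexOn ℝ s f)
    {W : Matrix n n ℝ} (hW : Wᵀ * W = 1) {l : n → ℝ} (hl : ∀ k, l k ∈ s) :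
    ∑ i, f ((W * diagonal l * Wᵀ).diag i) ≤ ∑ k, f (l k) := by
  have hentry : ∀ i, (W * diagonal l * Wᵀ).diag i = ∑ k, W i k ^ 2 • l k := by
    intro i
    simp only [diag_apply, Matrix.mul_apply, diagonal_apply, transpose_apply, mul_ite, mul_zero,
      Finset.sum_ite_eq', Finset.mem_univ, if_true, smul_eq_mul]
    exact Finset.sum_congr rfl fun k _ => by ring
  have hrow : ∀ i, ∑ k, W i k ^ 2 = 1 := fun i => by
    simpa [Matrix.mul_apply, sq] using
      congrFun (congrFun (mul_eq_one_comm.mp hW : W * Wᵀ = 1) i) i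
  have hcol : ∀ k, ∑ i, W i k ^ 2 = 1 := fun k => by
    simpa [Matrix.mul_apply, sq] using congrFun (congrFun hW k) k
  calc ∑ i, f ((W * diagonal l * Wᵀ).diag i)
      ≤ ∑ i, ∑ k, W i k ^ 2 • f (l k) := Finset.sum_le_sum fun i _ => by
        rw [hentry]
        exact hf.map_sum_le (fun k _ => sq_nonneg _) (hrow i) (fun k _ => hl k)
    _ = ∑ k, f (l k) := by
        rw [Finset.sum_comm]
        simp only [smul_eq_mul, ← Finset.sum_mul, hcol, one_mul]

noncomputable def pinching (U P : Matrix n n ℝ) : Matrix n n ℝ :=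
  U * diagonal (Uᵀ * P * U).diag * Uᵀ

end OrthogonalConjugation

section Spectral

variable {n : Type*} [Fintype n] [DecidableEq n] {A : Matrix n n ℝ}

lemma Matrix.IsHermitian.eigenvectorUnitary_transpose_mul_self (hA : A.IsHermitian) :
    (hA.eigenvectorUnitary : Matrix n n ℝ)ᵀ * hA.eigenvectorUnitary = 1 := by
  simpa [star_eq_conjTranspose, conjTranspose_eq_transpose_of_trivial] using
    mem_unitaryGroup_iff'.mp hA.eigenvectorUnitary.2

lemma Matrix.IsHermitian.spectral_theorem_transpose (hA : A.IsHermitian) :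
    A = hA.eigenvectorUnitary * diagonal hA.eigenvalues
      * (hA.eigenvectorUnitary : Matrix n n ℝ)ᵀ := by
  simpa [star_eq_conjTranspose, conjTranspose_eq_transpose_of_trivial, Function.comp_def]
    using hA.spectral_theorem

end Spectral

lemma Polynomial.exists_eval_eq_on_finset {K : Type*} [Field K] [DecidableEq K] (T : Finset K)
    (f : K → K) : ∃ p : K[X], ∀ x ∈ T, p.eval x = f x :=
  ⟨Lagrange.interpolate T id f,
    fun _ hx => Lagrange.eval_interpolate_at_node f (Set.injOn_id _) hx⟩

lemma skl_eq {s t : ℝ} (ht : t ≠ 0) : skl s t = s * Real.log s - s * Real.log t - s + t := by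
  rcases eq_or_ne s 0 with rfl | hs
  · simp [skl]
  · rw [skl, Real.log_div hs ht]
    ring

lemma skl_eq_mul_klFun {s t : ℝ} (ht : t ≠ 0) :
    skl s t = t * InformationTheory.klFun (s / t) := by
  rw [skl, InformationTheory.klFun_apply]
  field_simp
  ring

lemma skl_nonneg {s t : ℝ} (hs : 0 ≤ s) (ht : 0 < t) : 0 ≤ skl s t := by
  rw [skl_eq_mul_klFun ht.ne']
  exact mul_nonneg ht.le (InformationTheory.klFun_nonneg (div_nonneg hs ht.le))

section QuantumDivergence

variable {d : ℕ} {U : Matrix (Fin d) (Fin d) ℝ}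

lemma mlog_of_isHermitian {A : Matrix (Fin d) (Fin d) ℝ} (hA : A.IsHermitian) :
    mlog A = hA.eigenvectorUnitary * diagonal (fun s => Real.log (hA.eigenvalues s))
      * (hA.eigenvectorUnitary : Matrix (Fin d) (Fin d) ℝ)ᵀ := by
  rw [mlog, dif_pos hA]
  simp [star_eq_conjTranspose, conjTranspose_eq_transpose_of_trivial]

/-- `mlog` does not depend on the chosen eigenbasis: on both eigendecompositions it is the
same polynomial in the matrix, a polynomial interpolating `log` on all eigenvalues. -/
lemma mlog_conj_diagonal (hU : Uᵀ * U = 1) (σ : Fin d → ℝ) :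
    mlog (U * diagonal σ * Uᵀ) = U * diagonal (fun s => Real.log (σ s)) * Uᵀ := by
  have hA : (U * diagonal σ * Uᵀ).IsHermitian := by
    simpa [conjTranspose_eq_transpose_of_trivial] using
      isHermitian_mul_mul_conjTranspose U (isHermitian_diagonal σ)
  obtain ⟨p, hp⟩ := Polynomial.exists_eval_eq_on_finset
    (Finset.univ.image σ ∪ Finset.univ.image hA.eigenvalues) Real.log
  have hlog : ∀ {W : Matrix (Fin d) (Fin d) ℝ} (hW : Wᵀ * W = 1) (τ : Fin d → ℝ),
      (∀ s, τ s ∈ Finset.univ.image σ ∪ Finset.univ.image hA.eigenvalues) →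
      W * diagonal (fun s => Real.log (τ s)) * Wᵀ = aeval (W * diagonal τ * Wᵀ) p := by
    intro W hW τ hτ
    rw [aeval_conj_diagonal hW]
    simp only [hp _ (hτ _)]
  rw [mlog_of_isHermitian hA, hlog hA.eigenvectorUnitary_transpose_mul_self _ (by simp),
    ← hA.spectral_theorem_transpose, hlog hU _ (by simp)]

lemma sum_diag_conj_mul_log_le {P : Matrix (Fin d) (Fin d) ℝ} (hP : P.PosSemidef)
    (hU : Uᵀ * U = 1) :
    ∑ s, (Uᵀ * P * U).diag s * Real.log ((Uᵀ * P * U).diag s) ≤ (P * mlog P).trace := by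
  set V : Matrix (Fin d) (Fin d) ℝ := (hP.1.eigenvectorUnitary : Matrix (Fin d) (Fin d) ℝ)
  have hV : Vᵀ * V = 1 := hP.1.eigenvectorUnitary_transpose_mul_self
  have hspec : P = V * diagonal hP.1.eigenvalues * Vᵀ := hP.1.spectral_theorem_transpose
  have htrace : (P * mlog P).trace = ∑ k, hP.1.eigenvalues k * Real.log (hP.1.eigenvalues k) := by
    conv_lhs => rw [hspec]
    rw [mlog_conj_diagonal hV, trace_mul_conj_diagonal, diag_conj_conj_diagonal hV]
  have hUV : (Uᵀ * V)ᵀ * (Uᵀ * V) = 1 := by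
    rw [transpose_mul, transpose_transpose,
      show Vᵀ * U * (Uᵀ * V) = Vᵀ * (U * Uᵀ) * V by noncomm_ring, mul_eq_one_comm.mp hU,
      Matrix.mul_one, hV]
  have hconj : Uᵀ * P * U = (Uᵀ * V) * diagonal hP.1.eigenvalues * (Uᵀ * V)ᵀ := by
    conv_lhs => rw [hspec]
    rw [transpose_mul, transpose_transpose]
    noncomm_ring
  rw [htrace, hconj]
  exact Real.convexOn_mul_log.sum_diag_conj_diagonal_le hUV fun k => hP.eigenvalues_nonneg k

lemma qKL_self (P : Matrix (Fin d) (Fin d) ℝ) : qKL P P = 0 := by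
  simp [qKL]

lemma qKL_conj_diagonal_right (hU : Uᵀ * U = 1) (P : Matrix (Fin d) (Fin d) ℝ)
    (q : Fin d → ℝ) :
    qKL P (U * diagonal q * Uᵀ) = (P * mlog P).trace
      - ∑ s, (Uᵀ * P * U).diag s * Real.log (q s) - ∑ s, (Uᵀ * P * U).diag s + ∑ s, q s := by
  rw [qKL, trace_add, trace_sub, trace_sub, mlog_conj_diagonal hU, trace_mul_conj_diagonal,
    ← trace_transpose_mul_mul_self hU P, trace_conj_diagonal hU]
  rfl

lemma qKL_conj_diagonal_eq_sum_skl_add (hU : Uᵀ * U = 1) (P : Matrix (Fin d) (Fin d) ℝ)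
    {q : Fin d → ℝ} (hq : ∀ s, q s ≠ 0) :
    qKL P (U * diagonal q * Uᵀ)
      = ∑ s, skl ((Uᵀ * P * U).diag s) (q s) + qKL P (pinching U P) := by
  rw [pinching, qKL_conj_diagonal_right hU, qKL_conj_diagonal_right hU]
  simp only [skl_eq (hq _), Finset.sum_add_distrib, Finset.sum_sub_distrib]
  ring

lemma neg_qH_eq_sum_add (hU : Uᵀ * U = 1) (P : Matrix (Fin d) (Fin d) ℝ) :
    -qH P = ∑ s, ((Uᵀ * P * U).diag s * Real.log ((Uᵀ * P * U).diag s) - (Uᵀ * P * U).diag s)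
      + qKL P (pinching U P) := by
  rw [pinching, qKL_conj_diagonal_right hU, qH, neg_neg, trace_sub,
    ← trace_transpose_mul_mul_self hU P, Finset.sum_sub_distrib]
  unfold Matrix.trace
  ring

lemma qKL_pinching_nonneg {P : Matrix (Fin d) (Fin d) ℝ} (hP : P.PosSemidef) (hU : Uᵀ * U = 1) :
    0 ≤ qKL P (pinching U P) := by
  rw [pinching, qKL_conj_diagonal_right hU]
  linarith [sum_diag_conj_mul_log_le hP hU]

lemma qKL_pinching_conj_diagonal (hU : Uᵀ * U = 1) (x : Fin d → ℝ) :
    qKL (U * diagonal x * Uᵀ) (pinching U (U * diagonal x * Uᵀ)) = 0 := by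
  rw [pinching, diag_conj_conj_diagonal hU, qKL_self]

variable {I J : Type*} [Fintype I] [Fintype J]

lemma sum_sObj {κ : Type*} [Fintype κ] (ct : I → J → ℝ) (a : I → κ → ℝ) (b : J → κ → ℝ)
    (ρ1 ρ2 ε : ℝ) (g : κ → I → J → ℝ) :
    ∑ s, sObj ct (fun i => a i s) (fun j => b j s) ρ1 ρ2 ε (g s)
      = ∑ i, ∑ j, ct i j * ∑ s, g s i j
        + ρ1 * ∑ i, ∑ s, skl (∑ j, g s i j) (a i s)
        + ρ2 * ∑ j, ∑ s, skl (∑ i, g s i j) (b j s)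
        + ε * ∑ i, ∑ j, ∑ s, (g s i j * Real.log (g s i j) - g s i j) := by
  simp only [sObj, Finset.sum_add_distrib, ← Finset.mul_sum, Finset.mul_sum _ _ (ct _ _),
    Finset.sum_comm (γ := κ) (α := I), Finset.sum_comm (γ := κ) (α := J), mul_comm (ct _ _)]

lemma primal_eq_sum_sObj_add (hU : Uᵀ * U = 1) {a : I → Fin d → ℝ} {b : J → Fin d → ℝ}
    (ha : ∀ i s, a i s ≠ 0) (hb : ∀ j s, b j s ≠ 0) (ct : I → J → ℝ) (ρ1 ρ2 ε : ℝ)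
    (γ : I → J → Matrix (Fin d) (Fin d) ℝ) :
    primal (fun i j => ct i j • 1) (fun i => U * diagonal (a i) * Uᵀ)
        (fun j => U * diagonal (b j) * Uᵀ) ρ1 ρ2 ε γ
      = ∑ s, sObj ct (fun i => a i s) (fun j => b j s) ρ1 ρ2 ε
            (fun i j => (Uᵀ * γ i j * U).diag s)
        + (ρ1 * ∑ i, qKL (∑ j, γ i j) (pinching U (∑ j, γ i j))
          + ρ2 * ∑ j, qKL (∑ i, γ i j) (pinching U (∑ i, γ i j))
          + ε * ∑ i, ∑ j, qKL (γ i j) (pinching U (γ i j))) := by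
  rw [primal, sum_sObj, sub_eq_add_neg, ← mul_neg, ← Finset.sum_neg_distrib]
  simp only [← Finset.sum_neg_distrib, neg_qH_eq_sum_add hU, trace_mul_transpose_smul_one hU,
    qKL_conj_diagonal_eq_sum_skl_add hU _ (ha _), qKL_conj_diagonal_eq_sum_skl_add hU _ (hb _),
    diag_conj_sum, Finset.sum_add_distrib]
  ring

lemma sum_sObj_le_primal (hU : Uᵀ * U = 1) {a : I → Fin d → ℝ} {b : J → Fin d → ℝ}
    (ha : ∀ i s, a i s ≠ 0) (hb : ∀ j s, b j s ≠ 0) (ct : I → J → ℝ) {ρ1 ρ2 ε : ℝ}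
    (hρ1 : 0 ≤ ρ1) (hρ2 : 0 ≤ ρ2) (hε : 0 ≤ ε) {γ : I → J → Matrix (Fin d) (Fin d) ℝ}
    (hγ : ∀ i j, (γ i j).PosSemidef) :
    ∑ s, sObj ct (fun i => a i s) (fun j => b j s) ρ1 ρ2 ε (fun i j => (Uᵀ * γ i j * U).diag s)
      ≤ primal (fun i j => ct i j • 1) (fun i => U * diagonal (a i) * Uᵀ)
          (fun j => U * diagonal (b j) * Uᵀ) ρ1 ρ2 ε γ := by
  rw [primal_eq_sum_sObj_add hU ha hb]
  refine le_add_of_nonneg_right (add_nonneg (add_nonneg ?_ ?_) ?_)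
  · exact mul_nonneg hρ1 <| Finset.sum_nonneg fun i _ =>
      qKL_pinching_nonneg (posSemidef_sum _ fun j _ => hγ i j) hU
  · exact mul_nonneg hρ2 <| Finset.sum_nonneg fun j _ =>
      qKL_pinching_nonneg (posSemidef_sum _ fun i _ => hγ i j) hU
  · exact mul_nonneg hε <| Finset.sum_nonneg fun i _ => Finset.sum_nonneg fun j _ =>
      qKL_pinching_nonneg (hγ i j) hU

lemma primal_conj_diagonal (hU : Uᵀ * U = 1) {a : I → Fin d → ℝ} {b : J → Fin d → ℝ}
    (ha : ∀ i s, a i s ≠ 0) (hb : ∀ j s, b j s ≠ 0) (ct : I → J → ℝ) (ρ1 ρ2 ε : ℝ)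
    (g : Fin d → I → J → ℝ) :
    primal (fun i j => ct i j • 1) (fun i => U * diagonal (a i) * Uᵀ)
        (fun j => U * diagonal (b j) * Uᵀ) ρ1 ρ2 ε
        (fun i j => U * diagonal (fun s => g s i j) * Uᵀ)
      = ∑ s, sObj ct (fun i => a i s) (fun j => b j s) ρ1 ρ2 ε (g s) := by
  rw [primal_eq_sum_sObj_add hU ha hb]
  simp only [sum_conj_diagonal, qKL_pinching_conj_diagonal hU, diag_conj_conj_diagonal hU]
  simp

end QuantumDivergence

/-- Fenchel–Young inequality: `exp` is the convex conjugate of `x ↦ x log x - x`. -/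
lemma mul_sub_exp_le_mul_log_sub {x : ℝ} (hx : 0 < x) (y : ℝ) :
    x * y - Real.exp y ≤ x * Real.log x - x := by
  have h := mul_le_mul_of_nonneg_left (Real.add_one_le_exp (y - Real.log x)) hx.le
  rw [Real.exp_sub, Real.exp_log hx, mul_div_cancel₀ _ hx.ne'] at h
  linarith

lemma neg_mul_exp_le_mul_add_mul_log {x ε : ℝ} (hx : 0 < x) (hε : 0 < ε) (c : ℝ) :
    -ε * Real.exp (-c / ε) ≤ x * c + ε * (x * Real.log x - x) := by
  have h := mul_le_mul_of_nonneg_left (mul_sub_exp_le_mul_log_sub hx (-c / ε)) hε.le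
  have hc : ε * (x * (-c / ε)) = -(x * c) := by field_simp
  rw [mul_sub, hc] at h
  linarith

lemma sObj_ge {I J : Type*} [Fintype I] [Fintype J] (ct : I → J → ℝ) {a : I → ℝ} {b : J → ℝ}
    (ha : ∀ i, 0 < a i) (hb : ∀ j, 0 < b j) {ρ1 ρ2 ε : ℝ} (hρ1 : 0 ≤ ρ1) (hρ2 : 0 ≤ ρ2)
    (hε : 0 < ε) {g : I → J → ℝ} (hg : ∀ i j, 0 < g i j) :
    ∑ i, ∑ j, -ε * Real.exp (-ct i j / ε) ≤ sObj ct a b ρ1 ρ2 ε g := by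
  have hkl1 : 0 ≤ ρ1 * ∑ i, skl (∑ j, g i j) (a i) := mul_nonneg hρ1 <|
    Finset.sum_nonneg fun i _ => skl_nonneg (Finset.sum_nonneg fun j _ => (hg i j).le) (ha i)
  have hkl2 : 0 ≤ ρ2 * ∑ j, skl (∑ i, g i j) (b j) := mul_nonneg hρ2 <|
    Finset.sum_nonneg fun j _ => skl_nonneg (Finset.sum_nonneg fun i _ => (hg i j).le) (hb j)
  have hent : ∑ i, ∑ j, -ε * Real.exp (-ct i j / ε)
      ≤ ∑ i, ∑ j, g i j * ct i j + ε * ∑ i, ∑ j, (g i j * Real.log (g i j) - g i j) := by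
    simp only [Finset.mul_sum, ← Finset.sum_add_distrib]
    exact Finset.sum_le_sum fun i _ => Finset.sum_le_sum fun j _ =>
      neg_mul_exp_le_mul_add_mul_log (hg i j) hε _
  rw [sObj]
  linarith

lemma csInf_eq_sum_csInf {K : Type*} [Fintype K] {S : Set ℝ} {T : K → Set ℝ}
    (hne : ∀ k, (T k).Nonempty) (hbdd : ∀ k, BddBelow (T k))
    (hge : ∀ x ∈ S, ∃ t : K → ℝ, (∀ k, t k ∈ T k) ∧ ∑ k, t k ≤ x)
    (hle : ∀ t : K → ℝ, (∀ k, t k ∈ T k) → ∃ x ∈ S, x ≤ ∑ k, t k) :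
    sInf S = ∑ k, sInf (T k) := by
  have hlower : ∀ x ∈ S, ∑ k, sInf (T k) ≤ x := fun x hx => by
    obtain ⟨t, ht, htx⟩ := hge x hx
    exact (Finset.sum_le_sum fun k _ => csInf_le (hbdd k) (ht k)).trans htx
  obtain ⟨x₀, hx₀, -⟩ := hle (fun k => (hne k).some) fun k => (hne k).some_mem
  refine le_antisymm (le_of_forall_pos_le_add fun δ hδ => ?_) (le_csInf ⟨x₀, hx₀⟩ hlower)
  have hδ' : 0 < δ / (Fintype.card K + 1) := by positivity
  choose t ht htlt using fun k => exists_lt_of_csInf_lt (hne k) (lt_add_of_pos_right _ hδ')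
  obtain ⟨x, hx, hxt⟩ := hle t ht
  calc sInf S ≤ x := csInf_le ⟨_, hlower⟩ hx
    _ ≤ ∑ k, (sInf (T k) + δ / (Fintype.card K + 1)) :=
        hxt.trans (Finset.sum_le_sum fun k _ => (htlt k).le)
    _ = ∑ k, sInf (T k) + Fintype.card K * (δ / (Fintype.card K + 1)) := by
        rw [Finset.sum_add_distrib, Finset.sum_const, Finset.card_univ, nsmul_eq_mul]
    _ ≤ ∑ k, sInf (T k) + δ := by
        gcongr
        rw [mul_div_assoc', div_le_iff₀ (by positivity)]
        linarith

theorem quantum_ot_common_eigenbasis_reduction_general {d : ℕ} {I J : Type*}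
    [Fintype I] [Fintype J]
    (U : Matrix (Fin d) (Fin d) ℝ) (hU : Uᵀ * U = 1)
    (a : I → Fin d → ℝ) (b : J → Fin d → ℝ)
    (ha : ∀ i s, 0 < a i s) (hb : ∀ j s, 0 < b j s)
    (ct : I → J → ℝ)
    (ρ1 ρ2 ε : ℝ) (hρ1 : 0 < ρ1) (hρ2 : 0 < ρ2) (hε : 0 < ε) :
    sInf {x : ℝ | ∃ γ : I → J → Matrix (Fin d) (Fin d) ℝ,
        (∀ i j, (γ i j).PosDef) ∧
        x = primal (fun i j => ct i j • 1)
              (fun i => U * diagonal (a i) * Uᵀ)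
              (fun j => U * diagonal (b j) * Uᵀ) ρ1 ρ2 ε γ}
      = ∑ s : Fin d,
          sInf {x : ℝ | ∃ g : I → J → ℝ, (∀ i j, 0 < g i j) ∧
            x = sObj ct (fun i => a i s) (fun j => b j s) ρ1 ρ2 ε g} := by
  have ha' : ∀ i s, a i s ≠ 0 := fun i s => (ha i s).ne'
  have hb' : ∀ j s, b j s ≠ 0 := fun j s => (hb j s).ne'
  refine csInf_eq_sum_csInf (fun s => ⟨_, fun _ _ => 1, fun _ _ => one_pos, rfl⟩)
    (fun s => ⟨∑ i, ∑ j, -ε * Real.exp (-ct i j / ε), ?_⟩) ?_ ?_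
  · rintro x ⟨g, hg, rfl⟩
    exact sObj_ge ct (ha · s) (hb · s) hρ1.le hρ2.le hε hg
  · rintro x ⟨γ, hγ, rfl⟩
    refine ⟨_, fun s => ⟨fun i j => (Uᵀ * γ i j * U).diag s, fun i j => ?_, rfl⟩,
      sum_sObj_le_primal hU ha' hb' ct hρ1.le hρ2.le hε.le fun i j => (hγ i j).posSemidef⟩
    exact ((hγ i j).transpose_mul_mul_of_orthogonal hU).diag_pos
  · intro t ht
    choose g hg htg using ht
    refine ⟨_, ⟨fun i j => U * diagonal (g · i j) * Uᵀ, fun i j => ?_, rfl⟩, ?_⟩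
    · simpa using (PosDef.diagonal (hg · i j)).transpose_mul_mul_of_orthogonal
        (U := Uᵀ) (by simpa using mul_eq_one_comm.mp hU)
    · rw [primal_conj_diagonal hU ha' hb', ← Finset.sum_congr rfl fun s _ => htg s]

/-- **Common eigenbasis reduction.** If all inputs diagonalize in a common orthogonal
basis `U`, `μ_i = U diag(a_i) Uᵀ`, `ν_j = U diag(b_j) Uᵀ`, with positive eigenvalues,
and `c_{ij} = c̃_{ij}·Id`, then the quantum problem decomposes into `d` independent
scalar entropic unbalanced optimal transport problems along each eigendirection:
`W_ε(μ,ν) = Σ_{s=1}^d W̃_ε((a_{i,s})_i, (b_{j,s})_j)`. -/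
theorem quantum_ot_common_eigenbasis_reduction {d : ℕ} {I J : Type*}
    [Fintype I] [Fintype J] [Nonempty I] [Nonempty J]
    (U : Matrix (Fin d) (Fin d) ℝ) (hU : Uᵀ * U = 1)
    (a : I → Fin d → ℝ) (b : J → Fin d → ℝ)
    (ha : ∀ i s, 0 < a i s) (hb : ∀ j s, 0 < b j s)
    (ct : I → J → ℝ)
    (ρ1 ρ2 ε : ℝ) (hρ1 : 0 < ρ1) (hρ2 : 0 < ρ2) (hε : 0 < ε) :
    sInf {x : ℝ | ∃ γ : I → J → Matrix (Fin d) (Fin d) ℝ,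
        (∀ i j, (γ i j).PosDef) ∧
        x = primal (fun i j => ct i j • 1)
              (fun i => U * diagonal (a i) * Uᵀ)
              (fun j => U * diagonal (b j) * Uᵀ) ρ1 ρ2 ε γ}
      = ∑ s : Fin d,
          sInf {x : ℝ | ∃ g : I → J → ℝ, (∀ i j, 0 < g i j) ∧
            x = sObj ct (fun i => a i s) (fun j => b j s) ρ1 ρ2 ε g} :=
  quantum_ot_common_eigenbasis_reduction_general U hU a b ha hb ct ρ1 ρ2 ε hρ1 hρ2 hε
end

section
/- First-order conditions for the quantum barycenter dual: let F( (u^ℓ, v^ℓ)_{ℓ=1}^L, ν ) := −Σ_ℓ w_ℓ · tr[ ρ Σ_i exp(u_i^ℓ + log μ_i^ℓ) + Σ_j ν_j v_j^ℓ + ε Σ_{i,j} exp( K̃(u^ℓ,v^ℓ)_{ij} ) ], where K̃(u,v)_{ij} := −(c_{ij} + ρ u_i + v_j)/ε. At any point where all ν_j are positive definite and all partial derivatives of F with respect to the symmetric-matrix variables u_i^ℓ, v_j^ℓ and ν_j vanish, the following hold: (i) u_i^ℓ = log( Σ_j exp(K̃(u^ℓ,v^ℓ)_{ij}) ) − log μ_i^ℓ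 for all i, ℓ; (ii) ν_j = Σ_i exp( K̃(u^ℓ,v^ℓ)_{ij} ), equivalently log ν_j = log( Σ_i exp(K̃(u^ℓ,v^ℓ)_{ij}) ), for all j and every ℓ; and (iii) Σ_ℓ w_ℓ v_j^ℓ = 0 for all j. -/
open Matrix

/-- The barycenter kernel `K̃(u,v)_{ij} = -(c_{ij} + ρ u_i + v_j)/ε`. -/
noncomputable def Kt {d : ℕ} {I J : Type*}
    (c : I → J → Matrix (Fin d) (Fin d) ℝ) (ρ ε : ℝ)
    (u : I → Matrix (Fin d) (Fin d) ℝ) (v : J → Matrix (Fin d) (Fin d) ℝ)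
    (i : I) (j : J) : Matrix (Fin d) (Fin d) ℝ :=
  (-ε⁻¹) • (c i j + ρ • u i + v j)

/-- The quantum barycenter dual functional
`F((u^ℓ,v^ℓ)_ℓ, ν) = -Σ_ℓ w_ℓ tr[ρ Σ_i exp(u_i^ℓ + log μ_i^ℓ) + Σ_j ν_j v_j^ℓ
  + ε Σ_{ij} exp(K̃(u^ℓ,v^ℓ)_{ij})]`. -/
noncomputable def baryDual {d L : ℕ} {I J : Type*} [Fintype I] [Fintype J]
    (c : I → J → Matrix (Fin d) (Fin d) ℝ) (ρ ε : ℝ) (w : Fin L → ℝ)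
    (μ : Fin L → I → Matrix (Fin d) (Fin d) ℝ)
    (u : Fin L → I → Matrix (Fin d) (Fin d) ℝ)
    (v : Fin L → J → Matrix (Fin d) (Fin d) ℝ)
    (ν : J → Matrix (Fin d) (Fin d) ℝ) : ℝ :=
  -∑ ℓ, w ℓ *
    (ρ * ∑ i, (mexp (u ℓ i + mlog (μ ℓ i))).trace
      + ∑ j, (ν j * v ℓ j).trace
      + ε * ∑ i, ∑ j, (mexp (Kt c ρ ε (u ℓ) (v ℓ) i j)).trace)

/-!
Along a coordinate line, `F` is a weighted sum of functions `t ↦ tr exp(A + tX)` and of the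
pairings `tr(ν_j v_j^ℓ)`. Differentiating the exponential series termwise, `t ↦ exp(A + tV)` has
derivative `∑ₙ (1/n!) ∑ₖ Aⁿ⁻¹⁻ᵏ V Aᵏ` at `0`, and by cyclicity of the trace every inner sum has
trace `n · tr(Aⁿ⁻¹ V)`, so `d/dt tr exp(A + tV) = tr(exp A · V)` although `A` and `V` need not
commute. Each partial derivative of `F` in a symmetric direction `V` is therefore `tr(G V)` for an
explicit symmetric gradient `G`, and testing with `V = G` turns stationarity into `G = 0`. The
`u`-gradient gives `exp(u + log μ) = Σⱼ exp K̃ᵢⱼ`, hence (i) because `log ∘ exp` is the identity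
on symmetric matrices; the `v`- and `ν`-gradients give (ii) and (iii).
-/

open scoped Nat
open NormedSpace Finset

section ExpDeriv

variable {𝔸 : Type*} [NormedRing 𝔸]

lemma norm_pow_mul_le (x y : 𝔸) (n : ℕ) : ‖x ^ n * y‖ ≤ ‖x‖ ^ n * ‖y‖ := by
  rcases n.eq_zero_or_pos with rfl | hn
  · simp
  · exact (norm_mul_le _ _).trans (by gcongr; exact norm_pow_le' x hn)

lemma norm_mul_pow_le (x y : 𝔸) (n : ℕ) : ‖y * x ^ n‖ ≤ ‖y‖ * ‖x‖ ^ n := by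
  rcases n.eq_zero_or_pos with rfl | hn
  · simp
  · exact (norm_mul_le _ _).trans (by gcongr; exact norm_pow_le' x hn)

lemma norm_sum_pow_mul_pow_le (x y : 𝔸) (n : ℕ) :
    ‖∑ i ∈ range n, x ^ (n.pred - i) * y * x ^ i‖ ≤ n * (‖x‖ ^ n.pred * ‖y‖) := by
  calc ‖∑ i ∈ range n, x ^ (n.pred - i) * y * x ^ i‖
      ≤ ∑ i ∈ range n, ‖x‖ ^ n.pred * ‖y‖ := by
        refine (norm_sum_le _ _).trans (sum_le_sum fun i hi => ?_)
        have hi : i ≤ n.pred := Nat.le_pred_of_lt (mem_range.mp hi)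
        calc ‖x ^ (n.pred - i) * y * x ^ i‖ ≤ ‖x‖ ^ (n.pred - i) * (‖y‖ * ‖x‖ ^ i) := by
              rw [mul_assoc]
              exact (norm_pow_mul_le _ _ _).trans (by gcongr; exact norm_mul_pow_le _ _ _)
          _ = ‖x‖ ^ n.pred * ‖y‖ := by
              rw [mul_left_comm, ← pow_add, Nat.sub_add_cancel hi, mul_comm]
    _ = n * (‖x‖ ^ n.pred * ‖y‖) := by simp

lemma summable_inv_factorial_mul_nat_mul_pow (r c : ℝ) :
    Summable fun n : ℕ => (n ! : ℝ)⁻¹ * (n * (r ^ n.pred * c)) := by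
  refine (summable_nat_add_iff 1).mp ?_
  have h : ∀ n : ℕ, ((n + 1) ! : ℝ)⁻¹ * ((n + 1 : ℕ) * (r ^ (n + 1).pred * c))
      = r ^ n / n ! * c := by
    intro n
    rw [Nat.factorial_succ, Nat.pred_succ]
    push_cast
    field_simp
  simpa only [h] using (Real.summable_pow_div_factorial r).mul_right c

variable [NormedAlgebra ℝ 𝔸]

lemma norm_inv_factorial_smul_sum_le (x y : 𝔸) (n : ℕ) :
    ‖(n ! : ℝ)⁻¹ • ∑ i ∈ range n, x ^ (n.pred - i) * y * x ^ i‖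
      ≤ (n ! : ℝ)⁻¹ * (n * (‖x‖ ^ n.pred * ‖y‖)) := by
  rw [norm_smul, norm_inv, Real.norm_natCast]
  gcongr
  exact norm_sum_pow_mul_pow_le x y n

variable [CompleteSpace 𝔸]

theorem hasDerivAt_exp_add_smul (A V : 𝔸) :
    HasDerivAt (fun t : ℝ => exp (A + t • V))
      (∑' n : ℕ, (n ! : ℝ)⁻¹ • ∑ i ∈ range n, A ^ (n.pred - i) * V * A ^ i) 0 := by
  have hline (t : ℝ) : HasDerivAt (fun s : ℝ => A + s • V) V t :=
    (((hasDerivAt_id t).smul_const V).const_add A).congr_deriv (one_smul _ _)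
  have hbound : ∀ t ∈ Metric.ball (0 : ℝ) 1, ‖A + t • V‖ ≤ ‖A‖ + ‖V‖ := by
    intro t ht
    rw [mem_ball_zero_iff, Real.norm_eq_abs] at ht
    calc ‖A + t • V‖ ≤ ‖A‖ + |t| * ‖V‖ := by
          rw [← Real.norm_eq_abs, ← norm_smul]; exact norm_add_le _ _
      _ ≤ ‖A‖ + ‖V‖ := by gcongr; exact mul_le_of_le_one_left (norm_nonneg V) ht.le
  have h0 : (0 : ℝ) ∈ Metric.ball (0 : ℝ) 1 := Metric.mem_ball_self one_pos
  have key := hasDerivAt_tsum_of_isPreconnected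
    (g := fun n t => (n ! : ℝ)⁻¹ • (A + t • V) ^ n)
    (summable_inv_factorial_mul_nat_mul_pow (‖A‖ + ‖V‖) ‖V‖) Metric.isOpen_ball
    (convex_ball (0 : ℝ) 1).isPreconnected
    (fun n t _ => ((hline t).fun_pow' n).fun_const_smul _)
    (fun n t ht => (norm_inv_factorial_smul_sum_le _ _ n).trans (by gcongr; exact hbound t ht))
    h0 (by simpa using expSeries_summable' (𝕂 := ℝ) A) h0
  simpa [exp_eq_tsum ℝ] using key

theorem hasDerivAt_tracial_exp_add_smul (τ : 𝔸 →L[ℝ] ℝ) (hτ : ∀ x y, τ (x * y) = τ (y * x))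
    (A V : 𝔸) : HasDerivAt (fun t : ℝ => τ (exp (A + t • V))) (τ (exp A * V)) 0 := by
  have hterm (n : ℕ) : τ ((n ! : ℝ)⁻¹ • ∑ i ∈ range n, A ^ (n.pred - i) * V * A ^ i)
      = (n ! : ℝ)⁻¹ * (n * τ (A ^ n.pred * V)) := by
    have hcycle : ∀ i ∈ range n, τ (A ^ (n.pred - i) * V * A ^ i) = τ (A ^ n.pred * V) := by
      intro i hi
      rw [hτ, ← mul_assoc, ← pow_add,
        Nat.add_sub_cancel' (Nat.le_pred_of_lt (mem_range.mp hi))]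
    rw [map_smul, map_sum, sum_congr rfl hcycle, sum_const, card_range, nsmul_eq_mul,
      smul_eq_mul]
  have hderiv : Summable fun n : ℕ => (n ! : ℝ)⁻¹ * (n * τ (A ^ n.pred * V)) := by
    simpa only [hterm] using
      ((summable_inv_factorial_mul_nat_mul_pow ‖A‖ ‖V‖).of_norm_bounded
        (norm_inv_factorial_smul_sum_le A V)).mapL τ
  have hexp : τ (exp A * V) = ∑' n : ℕ, (n ! : ℝ)⁻¹ * τ (A ^ n * V) := by
    have hsum := expSeries_summable' (𝕂 := ℝ) A
    rw [exp_eq_tsum ℝ, ← hsum.tsum_mul_right, τ.map_tsum (hsum.mul_right V)]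
    simp only [smul_mul_assoc, map_smul, smul_eq_mul]
  have hshift : ∑' n : ℕ, (n ! : ℝ)⁻¹ * (n * τ (A ^ n.pred * V))
      = ∑' n : ℕ, (n ! : ℝ)⁻¹ * τ (A ^ n * V) := by
    rw [hderiv.tsum_eq_zero_add]
    simp only [Nat.cast_zero, zero_mul, mul_zero, zero_add]
    refine tsum_congr fun n => ?_
    rw [Nat.factorial_succ, Nat.pred_succ]
    push_cast
    field_simp
  have h := τ.hasFDerivAt.comp_hasDerivAt 0 (hasDerivAt_exp_add_smul A V)
  rwa [τ.map_tsum ((summable_inv_factorial_mul_nat_mul_pow ‖A‖ ‖V‖).of_norm_bounded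
    (norm_inv_factorial_smul_sum_le A V)), tsum_congr hterm, hshift, ← hexp] at h

end ExpDeriv

section HermitianMatrix

open scoped Matrix.Norms.L2Operator

lemma Matrix.IsHermitian.eq_of_forall_mul_trace_sub_mul_eq_zero {n R : Type*} [Fintype n]
    [CommRing R] [NoZeroDivisors R] [PartialOrder R] [StarRing R] [StarOrderedRing R]
    {A B : Matrix n n R} (hA : A.IsHermitian) (hB : B.IsHermitian) {a : R} (ha : a ≠ 0)
    (h : ∀ V : Matrix n n R, V.IsHermitian → a * ((A - B) * V).trace = 0) : A = B := by
  have hAB := hA.sub hB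
  rw [← sub_eq_zero, ← trace_conjTranspose_mul_self_eq_zero_iff, hAB.eq]
  exact (mul_eq_zero.mp (h _ hAB)).resolve_left ha

lemma HasDerivAt.trace {n : Type*} [Fintype n] [DecidableEq n] {f : ℝ → Matrix n n ℝ}
    {f' : Matrix n n ℝ} {t : ℝ} (hf : HasDerivAt f f' t) :
    HasDerivAt (fun s => (f s).trace) f'.trace t :=
  (traceLinearMap n ℝ ℝ).toContinuousLinearMap.hasFDerivAt.comp_hasDerivAt t hf

variable {d : ℕ}

lemma mlog_eq_log (A : Matrix (Fin d) (Fin d) ℝ) : mlog A = CFC.log A := by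
  unfold mlog CFC.log
  split_ifs with hA
  · rw [hA.cfc_eq, IsHermitian.cfc, Unitary.conjStarAlgAut_apply]
    simp [Function.comp_def]
  · exact (cfc_apply_of_not_predicate A hA).symm

lemma isHermitian_mlog (A : Matrix (Fin d) (Fin d) ℝ) : (mlog A).IsHermitian := by
  rw [mlog_eq_log]
  exact cfc_predicate _ _

lemma mlog_mexp {A : Matrix (Fin d) (Fin d) ℝ} (hA : A.IsHermitian) : mlog (mexp A) = A := by
  rw [mlog_eq_log]
  exact CFC.log_exp A hA

lemma hasDerivAt_trace_mexp_add_smul (A V : Matrix (Fin d) (Fin d) ℝ) :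
    HasDerivAt (fun t : ℝ => (mexp (A + t • V)).trace) (mexp A * V).trace 0 :=
  hasDerivAt_tracial_exp_add_smul (traceLinearMap (Fin d) ℝ ℝ).toContinuousLinearMap
    trace_mul_comm A V

end HermitianMatrix

section BarycenterDual

open scoped Matrix.Norms.L2Operator

variable {d L : ℕ} {I J : Type*} (c : I → J → Matrix (Fin d) (Fin d) ℝ) (ρ ε : ℝ)

lemma Kt_add_smul (u U : I → Matrix (Fin d) (Fin d) ℝ) (v W : J → Matrix (Fin d) (Fin d) ℝ)
    (t : ℝ) (i : I) (j : J) :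
    Kt c ρ ε (u + t • U) (v + t • W) i j
      = Kt c ρ ε u v i j + t • ((-ε⁻¹) • (ρ • U i + W j)) := by
  simp only [Kt, Pi.add_apply, Pi.smul_apply]
  module

lemma isHermitian_Kt {u : I → Matrix (Fin d) (Fin d) ℝ} {v : J → Matrix (Fin d) (Fin d) ℝ}
    (hc : ∀ i j, (c i j).IsHermitian) (hu : ∀ i, (u i).IsHermitian)
    (hv : ∀ j, (v j).IsHermitian) (i : I) (j : J) : (Kt c ρ ε u v i j).IsHermitian :=
  (((hc i j).add ((hu i).smul (IsSelfAdjoint.all ρ))).add (hv j)).smul (IsSelfAdjoint.all _)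

variable [Fintype I] [Fintype J] (w : Fin L → ℝ) (μ : Fin L → I → Matrix (Fin d) (Fin d) ℝ)

theorem hasDerivAt_baryDual (hε : ε ≠ 0) (u U : Fin L → I → Matrix (Fin d) (Fin d) ℝ)
    (v W : Fin L → J → Matrix (Fin d) (Fin d) ℝ) (ν N : J → Matrix (Fin d) (Fin d) ℝ) :
    HasDerivAt (fun t : ℝ => baryDual c ρ ε w μ (u + t • U) (v + t • W) (ν + t • N))
      (-∑ ℓ, w ℓ * (ρ * ∑ i, (mexp (u ℓ i + mlog (μ ℓ i)) * U ℓ i).trace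
        + ∑ j, (N j * v ℓ j + ν j * W ℓ j).trace
        - ∑ i, ∑ j, (mexp (Kt c ρ ε (u ℓ) (v ℓ) i j) * (ρ • U ℓ i + W ℓ j)).trace)) 0 := by
  have hline (X Y : Matrix (Fin d) (Fin d) ℝ) : HasDerivAt (fun t : ℝ => X + t • Y) Y 0 :=
    (((hasDerivAt_id 0).smul_const Y).const_add X).congr_deriv (one_smul _ _)
  have hfun : (fun t : ℝ => baryDual c ρ ε w μ (u + t • U) (v + t • W) (ν + t • N))
      = fun t : ℝ => -∑ ℓ, w ℓ * (ρ * ∑ i, (mexp (u ℓ i + mlog (μ ℓ i) + t • U ℓ i)).trace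
        + ∑ j, ((ν j + t • N j) * (v ℓ j + t • W ℓ j)).trace
        + ε * ∑ i, ∑ j,
          (mexp (Kt c ρ ε (u ℓ) (v ℓ) i j + t • ((-ε⁻¹) • (ρ • U ℓ i + W ℓ j)))).trace) := by
    funext t
    simp only [baryDual, Pi.add_apply, Pi.smul_apply, Kt_add_smul,
      add_right_comm _ (_ • _) (mlog _)]
  have hterm (ℓ : Fin L) : HasDerivAt (fun t : ℝ =>
      ρ * ∑ i, (mexp (u ℓ i + mlog (μ ℓ i) + t • U ℓ i)).trace
        + ∑ j, ((ν j + t • N j) * (v ℓ j + t • W ℓ j)).trace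
        + ε * ∑ i, ∑ j,
          (mexp (Kt c ρ ε (u ℓ) (v ℓ) i j + t • ((-ε⁻¹) • (ρ • U ℓ i + W ℓ j)))).trace)
      (ρ * ∑ i, (mexp (u ℓ i + mlog (μ ℓ i)) * U ℓ i).trace
        + ∑ j, (N j * v ℓ j + ν j * W ℓ j).trace
        - ∑ i, ∑ j, (mexp (Kt c ρ ε (u ℓ) (v ℓ) i j) * (ρ • U ℓ i + W ℓ j)).trace) 0 := by
    refine HasDerivAt.congr_deriv
      ((((HasDerivAt.fun_sum fun i _ => hasDerivAt_trace_mexp_add_smul _ _).const_mul ρ).add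
        (HasDerivAt.fun_sum fun j _ => ((hline _ _).mul (hline _ _)).trace)).add
        ((HasDerivAt.fun_sum fun i _ => HasDerivAt.fun_sum fun j _ =>
          hasDerivAt_trace_mexp_add_smul _ _).const_mul ε)) ?_
    simp only [zero_smul, add_zero, mul_smul_comm, trace_smul, smul_eq_mul, ← mul_sum]
    field_simp
    ring
  rw [hfun]
  exact (HasDerivAt.fun_sum fun ℓ _ => (hterm ℓ).const_mul (w ℓ)).neg

variable (u : Fin L → I → Matrix (Fin d) (Fin d) ℝ) (v : Fin L → J → Matrix (Fin d) (Fin d) ℝ)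
  (ν : J → Matrix (Fin d) (Fin d) ℝ)

theorem hasDerivAt_baryDual_u [DecidableEq I] (hε : ε ≠ 0)
    (ℓ : Fin L) (i : I) (V : Matrix (Fin d) (Fin d) ℝ) :
    HasDerivAt (fun t : ℝ => baryDual c ρ ε w μ
        (fun ℓ' i' => u ℓ' i' + if ℓ' = ℓ ∧ i' = i then t • V else 0) v ν)
      (-(w ℓ * ρ) *
        ((mexp (u ℓ i + mlog (μ ℓ i)) - ∑ j, mexp (Kt c ρ ε (u ℓ) (v ℓ) i j)) * V).trace) 0 := by
  convert hasDerivAt_baryDual c ρ ε w μ hε u (fun ℓ' i' => if ℓ' = ℓ ∧ i' = i then V else 0)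
    v 0 ν 0 using 1
  · funext t
    congr
    · funext ℓ' i'
      simp [smul_ite]
    all_goals simp
  · simp [ite_and, mul_ite, apply_ite trace, sub_mul, trace_sub, sum_mul, trace_sum, ite_sub_ite,
      ← mul_sum]
    ring

theorem hasDerivAt_baryDual_v [DecidableEq J] (hε : ε ≠ 0)
    (ℓ : Fin L) (j : J) (V : Matrix (Fin d) (Fin d) ℝ) :
    HasDerivAt (fun t : ℝ => baryDual c ρ ε w μ u
        (fun ℓ' j' => v ℓ' j' + if ℓ' = ℓ ∧ j' = j then t • V else 0) ν)
      (-w ℓ * ((ν j - ∑ i, mexp (Kt c ρ ε (u ℓ) (v ℓ) i j)) * V).trace) 0 := by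
  convert hasDerivAt_baryDual c ρ ε w μ hε u 0 v
    (fun ℓ' j' => if ℓ' = ℓ ∧ j' = j then V else 0) ν 0 using 1
  · funext t
    congr
    · simp
    · funext ℓ' j'
      simp [smul_ite]
    · simp
  · simp [ite_and, mul_ite, apply_ite trace, sub_mul, trace_sub, sum_mul, trace_sum,
      ite_sub_ite]

theorem hasDerivAt_baryDual_ν [DecidableEq J] (hε : ε ≠ 0) (j : J) (V : Matrix (Fin d) (Fin d) ℝ) :
    HasDerivAt (fun t : ℝ => baryDual c ρ ε w μ u v
        (fun j' => ν j' + if j' = j then t • V else 0))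
      (-((∑ ℓ, w ℓ • v ℓ j) * V).trace) 0 := by
  convert hasDerivAt_baryDual c ρ ε w μ hε u 0 v 0 ν
    (fun j' => if j' = j then V else 0) using 1
  · funext t
    congr
    · simp
    · simp
    · funext j'
      simp [smul_ite]
  · simp [apply_ite trace, sum_mul, trace_sum, trace_mul_comm V]

end BarycenterDual

theorem quantum_barycenter_first_order_general {d L : ℕ} {I J : Type*}
    [Fintype I] [Fintype J] [DecidableEq I] [DecidableEq J]
    (c : I → J → Matrix (Fin d) (Fin d) ℝ) (hc : ∀ i j, (c i j).IsHermitian)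
    (ρ ε : ℝ) (hρ : 0 < ρ) (hε : 0 < ε)
    (w : Fin L → ℝ) (hw : ∀ ℓ, 0 < w ℓ)
    (μ : Fin L → I → Matrix (Fin d) (Fin d) ℝ)
    (u : Fin L → I → Matrix (Fin d) (Fin d) ℝ)
    (v : Fin L → J → Matrix (Fin d) (Fin d) ℝ)
    (ν : J → Matrix (Fin d) (Fin d) ℝ)
    (hu : ∀ ℓ i, (u ℓ i).IsHermitian) (hv : ∀ ℓ j, (v ℓ j).IsHermitian)
    (hν : ∀ j, (ν j).PosDef)
    (hdu : ∀ (ℓ : Fin L) (i : I) (V : Matrix (Fin d) (Fin d) ℝ), V.IsHermitian →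
      HasDerivAt (fun t : ℝ => baryDual c ρ ε w μ
          (fun ℓ' i' => u ℓ' i' + if ℓ' = ℓ ∧ i' = i then t • V else 0) v ν) 0 0)
    (hdv : ∀ (ℓ : Fin L) (j : J) (V : Matrix (Fin d) (Fin d) ℝ), V.IsHermitian →
      HasDerivAt (fun t : ℝ => baryDual c ρ ε w μ u
          (fun ℓ' j' => v ℓ' j' + if ℓ' = ℓ ∧ j' = j then t • V else 0) ν) 0 0)
    (hdν : ∀ (j : J) (V : Matrix (Fin d) (Fin d) ℝ), V.IsHermitian →
      HasDerivAt (fun t : ℝ => baryDual c ρ ε w μ u v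
          (fun j' => ν j' + if j' = j then t • V else 0)) 0 0) :
    (∀ ℓ i, u ℓ i = mlog (∑ j, mexp (Kt c ρ ε (u ℓ) (v ℓ) i j)) - mlog (μ ℓ i)) ∧
    (∀ j (ℓ : Fin L), ν j = ∑ i, mexp (Kt c ρ ε (u ℓ) (v ℓ) i j)) ∧
    (∀ j, ∑ ℓ, w ℓ • v ℓ j = 0) := by
  have hKt (ℓ : Fin L) (i : I) (j : J) := isHermitian_Kt c ρ ε hc (hu ℓ) (hv ℓ) i j
  have hlogμ (ℓ : Fin L) (i : I) := (hu ℓ i).add (isHermitian_mlog (μ ℓ i))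
  have hstat_u (ℓ : Fin L) (i : I) :
      mexp (u ℓ i + mlog (μ ℓ i)) = ∑ j, mexp (Kt c ρ ε (u ℓ) (v ℓ) i j) :=
    (hlogμ ℓ i).exp.eq_of_forall_mul_trace_sub_mul_eq_zero
      (isSelfAdjoint_sum _ fun j _ => (hKt ℓ i j).exp)
      (neg_ne_zero.mpr (mul_pos (hw ℓ) hρ).ne') fun V hV =>
      (hasDerivAt_baryDual_u c ρ ε w μ u v ν hε.ne' ℓ i V).unique (hdu ℓ i V hV)
  refine ⟨fun ℓ i => ?_, fun j ℓ => ?_, fun j => ?_⟩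
  · rw [← hstat_u, mlog_mexp (hlogμ ℓ i), add_sub_cancel_right]
  · exact (hν j).isHermitian.eq_of_forall_mul_trace_sub_mul_eq_zero
      (isSelfAdjoint_sum _ fun i _ => (hKt ℓ i j).exp) (neg_ne_zero.mpr (hw ℓ).ne') fun V hV =>
      (hasDerivAt_baryDual_v c ρ ε w μ u v ν hε.ne' ℓ j V).unique (hdv ℓ j V hV)
  · have hsum : (∑ ℓ, w ℓ • v ℓ j).IsHermitian :=
      isSelfAdjoint_sum _ fun ℓ _ => (hv ℓ j).smul (IsSelfAdjoint.all (w ℓ))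
    refine hsum.eq_of_forall_mul_trace_sub_mul_eq_zero isHermitian_zero
      (neg_ne_zero.mpr one_ne_zero) fun V hV => ?_
    simpa using (hasDerivAt_baryDual_ν c ρ ε w μ u v ν hε.ne' j V).unique (hdν j V hV)

/-- **First-order conditions for the quantum barycenter dual.** At any point where all
`ν_j` are positive definite and all partial derivatives of `F` with respect to the
symmetric-matrix variables `u_i^ℓ`, `v_j^ℓ` and `ν_j` vanish (expressed through
directional derivatives along symmetric directions), one has
(i) `u_i^ℓ = log(Σ_j exp(K̃(u^ℓ,v^ℓ)_{ij})) - log μ_i^ℓ`;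
(ii) `ν_j = Σ_i exp(K̃(u^ℓ,v^ℓ)_{ij})` for every `ℓ`; and
(iii) `Σ_ℓ w_ℓ v_j^ℓ = 0`. -/
theorem quantum_barycenter_first_order {d L : ℕ} {I J : Type*}
    [Fintype I] [Fintype J] [DecidableEq I] [DecidableEq J]
    (c : I → J → Matrix (Fin d) (Fin d) ℝ) (hc : ∀ i j, (c i j).IsHermitian)
    (ρ ε : ℝ) (hρ : 0 < ρ) (hε : 0 < ε)
    (w : Fin L → ℝ) (hw : ∀ ℓ, 0 < w ℓ) (hw1 : ∑ ℓ, w ℓ = 1)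
    (μ : Fin L → I → Matrix (Fin d) (Fin d) ℝ) (hμ : ∀ ℓ i, (μ ℓ i).PosDef)
    (u : Fin L → I → Matrix (Fin d) (Fin d) ℝ)
    (v : Fin L → J → Matrix (Fin d) (Fin d) ℝ)
    (ν : J → Matrix (Fin d) (Fin d) ℝ)
    (hu : ∀ ℓ i, (u ℓ i).IsHermitian) (hv : ∀ ℓ j, (v ℓ j).IsHermitian)
    (hν : ∀ j, (ν j).PosDef)
    (hdu : ∀ (ℓ : Fin L) (i : I) (V : Matrix (Fin d) (Fin d) ℝ), V.IsHermitian →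
      HasDerivAt (fun t : ℝ => baryDual c ρ ε w μ
          (fun ℓ' i' => u ℓ' i' + if ℓ' = ℓ ∧ i' = i then t • V else 0) v ν) 0 0)
    (hdv : ∀ (ℓ : Fin L) (j : J) (V : Matrix (Fin d) (Fin d) ℝ), V.IsHermitian →
      HasDerivAt (fun t : ℝ => baryDual c ρ ε w μ u
          (fun ℓ' j' => v ℓ' j' + if ℓ' = ℓ ∧ j' = j then t • V else 0) ν) 0 0)
    (hdν : ∀ (j : J) (V : Matrix (Fin d) (Fin d) ℝ), V.IsHermitian →
      HasDerivAt (fun t : ℝ => baryDual c ρ ε w μ u v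
          (fun j' => ν j' + if j' = j then t • V else 0)) 0 0) :
    (∀ ℓ i, u ℓ i = mlog (∑ j, mexp (Kt c ρ ε (u ℓ) (v ℓ) i j)) - mlog (μ ℓ i)) ∧
    (∀ j (ℓ : Fin L), ν j = ∑ i, mexp (Kt c ρ ε (u ℓ) (v ℓ) i j)) ∧
    (∀ j, ∑ ℓ, w ℓ • v ℓ j = 0) :=
  quantum_barycenter_first_order_general c hc ρ ε hρ hε w hw μ u v ν hu hv hν hdu hdv hdν
end
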